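/- Let N ∈ ℕ, W ∈ (0, 1/2), R ≤ N − 2⌊NW⌋ − 1, and let V ∈ ℂ^{(N−2⌊NW⌋−1)×R} have orthonormal columns. Let π₀ ≥ π₁ ≥ ⋯ ≥ π_{N−2⌊NW⌋−2} denote the singular values of F̄_{N,W}* B_{N,W} − V V* F̄_{N,W}* B_{N,W}. Then for Q = [F_{N,W} F̄_{N,W} V], ∫_{−W}^{W} ‖e_f − QQ*e_f‖₂² df ≤ Σ_{l=0}^{N−2⌊NW⌋−2} π_l. -/

import Mathlib

open Matrix MeasureTheory
open scoped Real

noncomputable section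

/-- The prolate matrix `B_{N,W}`. -/
def prolateR (N : ℕ) (W : ℝ) : Matrix (Fin N) (Fin N) ℝ :=
  Matrix.of fun m n : Fin N =>
    if m = n then 2 * W
    else Real.sin (2 * Real.pi * W * (((m : ℕ) : ℝ) - ((n : ℕ) : ℝ))) /
      (Real.pi * (((m : ℕ) : ℝ) - ((n : ℕ) : ℝ)))

def prolateC (N : ℕ) (W : ℝ) : Matrix (Fin N) (Fin N) ℂ :=
  (prolateR N W).map (fun x => (x : ℂ))

/-- sampled complex exponential `e_f`. -/
def eVec (N : ℕ) (f : ℝ) : Fin N → ℂ :=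
  fun n => Complex.exp (2 * (Real.pi : ℂ) * (f : ℂ) * ((n : ℕ) : ℂ) * Complex.I)

/-- partial DFT matrix with columns `(1/√N) e_{k/N}`, `|k| ≤ m`. -/
def Fmat (N m : ℕ) : Matrix (Fin N) (Fin (2 * m + 1)) ℂ :=
  Matrix.of fun n i =>
    ((1 / Real.sqrt N : ℝ) : ℂ) *
      Complex.exp (2 * (Real.pi : ℂ) * Complex.I * ((((i : ℕ) : ℤ) - (m : ℤ) : ℤ) : ℂ) *
        ((n : ℕ) : ℂ) / (N : ℂ))

/-- remaining (high-frequency) DFT columns, frequencies `k/N` with `k = m+1, …, N−m−1`. -/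
def Fbar (N m : ℕ) : Matrix (Fin N) (Fin (N - (2 * m + 1))) ℂ :=
  Matrix.of fun n j =>
    ((1 / Real.sqrt N : ℝ) : ℂ) *
      Complex.exp (2 * (Real.pi : ℂ) * Complex.I * (((j : ℕ) + m + 1 : ℕ) : ℂ) *
        ((n : ℕ) : ℂ) / (N : ℂ))

/-- squared residual `‖e_f − P e_f‖₂²`. -/
def residP {N : ℕ} (P : Matrix (Fin N) (Fin N) ℂ) (f : ℝ) : ℝ :=
  ∑ n, ‖(eVec N f - P.mulVec (eVec N f)) n‖ ^ 2

/-- `IsSVD A σ` : `σ` lists the singular values of `A` in decreasing order. -/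
def IsSVD {M N : ℕ} (A : Matrix (Fin M) (Fin N) ℂ) (σ : Fin M → ℝ) : Prop :=
  (∀ i, 0 ≤ σ i) ∧ (∀ i j : Fin M, i ≤ j → σ j ≤ σ i) ∧
  ∃ U : Matrix (Fin M) (Fin M) ℂ, ∃ V : Matrix (Fin N) (Fin N) ℂ,
    Uᴴ * U = 1 ∧ Vᴴ * V = 1 ∧
    A = U * (Matrix.of fun (i : Fin M) (j : Fin N) =>
      if (i : ℕ) = (j : ℕ) then ((σ i : ℝ) : ℂ) else 0) * Vᴴ

/-!
Write `P = QQ*`. The columns of `F` and `F̄` together form the unitary DFT matrix, so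
`I - P = F̄ (I - VV*) F̄*`, an orthogonal projection. The entries of `B` are the integrals
`∫_{-W}^{W} conj (e_f[a]) e_f[b] df`, so integrating `‖(I - P) e_f‖² = e_f* (I - P) e_f` gives
`Re tr((I - P) B) = Re tr(A F̄)` with `A = (I - VV*) F̄* B`. Finally, for an SVD `A = U Σ Y*` and
any `X` with orthonormal columns, `Re tr(A X) = Re tr(Σ Y* X U)`, and every entry of `Y* X U`
has modulus at most one, so `Re tr(A X) ≤ Σ_l π_l`.
-/

section

open Complex

lemma sum_exp_two_pi_I_mul_int_div {N : ℕ} (hN : 0 < N) (c : ℤ) :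
    ∑ n : Fin N, exp (2 * π * I * c * (n : ℕ) / N) = if (N : ℤ) ∣ c then (N : ℂ) else 0 := by
  have hζ := isPrimitiveRoot_exp N hN.ne'
  set z := exp (2 * π * I / N) ^ c with hz
  have hterm (n : ℕ) : exp (2 * π * I * c * n / N) = z ^ n := by
    rw [hz, ← exp_int_mul, ← exp_nat_mul]
    ring_nf
  simp_rw [Fin.sum_univ_eq_sum_range (fun n => exp (2 * π * I * c * n / N)), hterm]
  split_ifs with h
  · simp [z, (hζ.zpow_eq_one_iff_dvd c).2 h]
  · have hzN : z ^ N = 1 := by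
      rw [← zpow_natCast, ← _root_.zpow_mul, mul_comm c, _root_.zpow_mul, zpow_natCast,
        hζ.pow_eq_one, _root_.one_zpow]
    rw [geom_sum_eq (mt (hζ.zpow_eq_one_iff_dvd c).1 h), hzN, sub_self, zero_div]

def dftCols (N : ℕ) {ι : Type*} (κ : ι → ℤ) : Matrix (Fin N) ι ℂ :=
  of fun n i => ((1 / √N : ℝ) : ℂ) * exp (2 * π * I * (κ i : ℂ) * (n : ℕ) / N)

lemma conjTranspose_dftCols_mul_dftCols {N : ℕ} (hN : 0 < N) {ι ι' : Type*}
    (κ : ι → ℤ) (κ' : ι' → ℤ) :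
    (dftCols N κ)ᴴ * dftCols N κ' = of fun i j => if (N : ℤ) ∣ κ' j - κ i then 1 else 0 := by
  have hNC : (N : ℂ) ≠ 0 := by exact_mod_cast hN.ne'
  have hscale : ((1 / √N : ℝ) : ℂ) * ((1 / √N : ℝ) : ℂ) = (N : ℂ)⁻¹ := by
    rw [← ofReal_mul, div_mul_div_comm, Real.mul_self_sqrt (Nat.cast_nonneg N)]
    push_cast; ring
  ext i j
  have hterm (n : Fin N) : star (dftCols N κ n i) * dftCols N κ' n j =
      (N : ℂ)⁻¹ * exp (2 * π * I * ((κ' j - κ i : ℤ) : ℂ) * (n : ℕ) / N) := by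
    simp only [dftCols, of_apply, star_mul', RCLike.star_def, conj_ofReal, ← exp_conj,
      map_div₀, map_mul, conj_I, map_ofNat, map_intCast, map_natCast]
    rw [mul_mul_mul_comm, hscale, ← exp_add]
    congr 2
    push_cast
    ring
  simp only [mul_apply, conjTranspose_apply, hterm, ← Finset.mul_sum,
    sum_exp_two_pi_I_mul_int_div hN, of_apply]
  split_ifs <;> simp [hNC]

lemma conjTranspose_dftCols_mul_self {N : ℕ} (hN : 0 < N) {ι : Type*} [DecidableEq ι]
    {κ : ι → ℤ} (hκ : Function.Injective κ) (a : ℤ) (hrange : ∀ i, κ i ∈ Set.Ico a (a + N)) :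
    (dftCols N κ)ᴴ * dftCols N κ = 1 := by
  rw [conjTranspose_dftCols_mul_dftCols hN]
  ext i j
  simp only [of_apply, one_apply]
  by_cases hij : i = j
  · simp [hij]
  · have hκij : κ j - κ i ≠ 0 := sub_ne_zero.2 (hκ.ne (Ne.symm hij))
    have hi := hrange i
    have hj := hrange j
    simp only [Set.mem_Ico] at hi hj
    have hndvd : ¬(N : ℤ) ∣ κ j - κ i := fun hdvd =>
      hκij (Int.eq_zero_of_abs_lt_dvd hdvd (abs_lt.2 ⟨by linarith, by linarith⟩))
    rw [if_neg hij, if_neg hndvd]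

lemma Fbar_eq_dftCols (N m : ℕ) :
    Fbar N m = dftCols N fun j : Fin (N - (2 * m + 1)) => (j : ℤ) + m + 1 := by
  ext n j
  simp [Fbar, dftCols]

lemma fromCols_Fmat_Fbar (N m : ℕ) :
    fromCols (Fmat N m) (Fbar N m) =
      dftCols N (Sum.elim (fun i : Fin (2 * m + 1) => (i : ℤ) - m)
        fun j : Fin (N - (2 * m + 1)) => (j : ℤ) + m + 1) := by
  ext n (i | j)
  · rfl
  · simp [Fbar_eq_dftCols, dftCols]

lemma conjTranspose_Fbar_mul_Fbar {N m : ℕ} (h : 2 * m + 1 ≤ N) :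
    (Fbar N m)ᴴ * Fbar N m = 1 := by
  rw [Fbar_eq_dftCols]
  refine conjTranspose_dftCols_mul_self (by omega) (fun j j' hjj' => ?_) (m + 1) fun j => ?_
  · exact Fin.ext (by simpa using hjj')
  · have := j.isLt
    simp only [Set.mem_Ico]
    omega

lemma Fmat_mul_conjTranspose_add_Fbar_mul_conjTranspose {N m : ℕ} (h : 2 * m + 1 ≤ N) :
    Fmat N m * (Fmat N m)ᴴ + Fbar N m * (Fbar N m)ᴴ = 1 := by
  have hunitary : (fromCols (Fmat N m) (Fbar N m))ᴴ * fromCols (Fmat N m) (Fbar N m) = 1 := by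
    rw [fromCols_Fmat_Fbar]
    refine conjTranspose_dftCols_mul_self (by omega) (fun k k' hkk' => ?_) (-m) fun k => ?_
    · rcases k with i | j <;> rcases k' with i' | j' <;> simp only [Sum.elim_inl, Sum.elim_inr] at hkk' <;> grind
    · rcases k with i | j <;> simp only [Sum.elim_inl, Sum.elim_inr, Set.mem_Ico] <;> omega
  rw [← (mul_eq_one_comm_of_equiv (finSumFinEquiv.trans (finCongr (by omega)))).1 hunitary,
    conjTranspose_fromCols_eq_fromRows_conjTranspose, fromCols_mul_fromRows]

lemma norm_toLp_col_eq_one {𝕜 n k : Type*} [RCLike 𝕜] [Fintype n] [DecidableEq k]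
    {A : Matrix n k 𝕜} (hA : Aᴴ * A = 1) (p : k) : ‖WithLp.toLp 2 fun x => A x p‖ = 1 := by
  have h := congr_fun₂ hA p p
  simp only [mul_apply, one_apply_eq, conjTranspose_apply, RCLike.star_def, RCLike.conj_mul] at h
  rw [EuclideanSpace.norm_eq, Real.sqrt_eq_one]
  exact_mod_cast h

lemma norm_conjTranspose_mul_apply_le_one {𝕜 n k k' : Type*} [RCLike 𝕜] [Fintype n]
    [DecidableEq k] [DecidableEq k'] {A : Matrix n k 𝕜} {B : Matrix n k' 𝕜}
    (hA : Aᴴ * A = 1) (hB : Bᴴ * B = 1) (p : k) (q : k') : ‖(Aᴴ * B) p q‖ ≤ 1 := by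
  have hentry : (Aᴴ * B) p q =
      inner 𝕜 (WithLp.toLp 2 fun x => A x p) (WithLp.toLp 2 fun x => B x q) := by
    simp [EuclideanSpace.inner_toLp_toLp, dotProduct, mul_apply, mul_comm]
  calc ‖(Aᴴ * B) p q‖ ≤ ‖WithLp.toLp 2 fun x => A x p‖ * ‖WithLp.toLp 2 fun x => B x q‖ := by
        rw [hentry]; exact norm_inner_le_norm _ _
    _ = 1 := by rw [norm_toLp_col_eq_one hA, norm_toLp_col_eq_one hB, one_mul]

lemma IsSVD.re_trace_mul_le {K N : ℕ} {A : Matrix (Fin K) (Fin N) ℂ} {σ : Fin K → ℝ}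
    (h : IsSVD A σ) {X : Matrix (Fin N) (Fin K) ℂ} (hX : Xᴴ * X = 1) :
    (A * X).trace.re ≤ ∑ l, σ l := by
  obtain ⟨hpos, -, U, Y, hU, hY, rfl⟩ := h
  set D : Matrix (Fin K) (Fin N) ℂ := of fun i j => if (i : ℕ) = j then ((σ i : ℝ) : ℂ) else 0
  have hXU : (X * U)ᴴ * (X * U) = 1 := by
    rw [conjTranspose_mul, Matrix.mul_assoc, ← Matrix.mul_assoc Xᴴ, hX, Matrix.one_mul, hU]
  have htrace : (U * D * Yᴴ * X).trace = (D * (Yᴴ * (X * U))).trace := by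
    rw [Matrix.mul_assoc, Matrix.mul_assoc, trace_mul_comm, Matrix.mul_assoc, Matrix.mul_assoc]
  rw [htrace, trace, Complex.re_sum]
  refine Finset.sum_le_sum fun p _ => ?_
  have hbound := fun j => norm_conjTranspose_mul_apply_le_one hY hXU j p
  rw [diag_apply, mul_apply]
  by_cases hp : (p : ℕ) < N
  · rw [Finset.sum_eq_single ⟨p, hp⟩ (fun j _ hj => ?_) (by simp)]
    · simp only [D, of_apply, if_true, re_ofReal_mul]
      exact mul_le_of_le_one_right (hpos p) ((re_le_norm _).trans (hbound _))
    · simp only [D, of_apply, ite_mul, zero_mul]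
      exact if_neg fun h => hj (Fin.ext h.symm)
  · have hzero (j : Fin N) : D p j * (Yᴴ * (X * U)) j p = 0 := by
      simp only [D, of_apply, ite_mul, zero_mul]
      exact if_neg (by omega)
    rw [Finset.sum_eq_zero fun j _ => hzero j]
    exact hpos p

lemma isIdempotentElem_one_sub_mul_conjTranspose {R m n : Type*} [Ring R] [StarRing R]
    [Fintype m] [Fintype n] [DecidableEq m] [DecidableEq n] {V : Matrix m n R}
    (hV : Vᴴ * V = 1) : IsIdempotentElem (1 - V * Vᴴ) := by
  refine IsIdempotentElem.one_sub ?_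
  rw [IsIdempotentElem, Matrix.mul_assoc, ← Matrix.mul_assoc Vᴴ, hV, Matrix.one_mul]

lemma conjTranspose_mul_self_of_isIdempotentElem {R m k : Type*} [Ring R] [StarRing R]
    [Fintype m] [Fintype k] [DecidableEq k] {G : Matrix m k R} (hG : Gᴴ * G = 1)
    {M : Matrix k k R} (hM : M.IsHermitian) (hidem : IsIdempotentElem M) :
    (G * M * Gᴴ)ᴴ * (G * M * Gᴴ) = G * M * Gᴴ := by
  rw [conjTranspose_mul, conjTranspose_mul, conjTranspose_conjTranspose, hM.eq]
  calc G * (M * Gᴴ) * (G * M * Gᴴ) = G * (M * (Gᴴ * G) * M) * Gᴴ := by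
        simp only [Matrix.mul_assoc]
    _ = G * M * Gᴴ := by rw [hG, Matrix.mul_one, hidem.eq, Matrix.mul_assoc]

lemma one_sub_fromCols_mul_conjTranspose {R m n k l : Type*} [Ring R] [StarRing R]
    [Fintype m] [Fintype n] [Fintype k] [Fintype l] [DecidableEq m] [DecidableEq k]
    (F : Matrix m n R) (G : Matrix m k R) (V : Matrix k l R) (hFG : F * Fᴴ + G * Gᴴ = 1) :
    1 - fromCols F (G * V) * (fromCols F (G * V))ᴴ = G * (1 - V * Vᴴ) * Gᴴ := by
  rw [conjTranspose_fromCols_eq_fromRows_conjTranspose, fromCols_mul_fromRows, ← hFG,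
    conjTranspose_mul, Matrix.mul_sub, Matrix.sub_mul, Matrix.mul_one]
  simp only [Matrix.mul_assoc]
  abel

lemma continuous_eVec (N : ℕ) : Continuous fun f => eVec N f := by
  unfold eVec
  fun_prop

lemma integral_star_eVec_mul_eVec (N : ℕ) (W : ℝ) (a b : Fin N) :
    ∫ f in (-W)..W, star (eVec N f a) * eVec N f b = prolateC N W b a := by
  set d : ℝ := (b : ℕ) - (a : ℕ)
  have hexp (f : ℝ) : star (eVec N f a) * eVec N f b = exp (2 * π * d * I * f) := by
    simp only [eVec, RCLike.star_def, ← exp_conj, ← exp_add, map_mul, conj_I, map_ofNat,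
      conj_ofReal, map_natCast, d]
    push_cast
    ring_nf
  simp only [hexp, prolateC, prolateR, map_apply, of_apply]
  by_cases hba : b = a
  · simp [d, hba, two_mul]
  · have hd : d ≠ 0 := fun h => hba (Fin.ext (by exact_mod_cast sub_eq_zero.1 h))
    have hc : 2 * π * d * I ≠ 0 := by simp [Real.pi_ne_zero, hd]
    rw [integral_exp_mul_complex hc, if_neg hba]
    have hsin : exp (2 * π * d * I * W) - exp (2 * π * d * I * (-W : ℝ)) =
        2 * I * sin (2 * π * d * W) := by
      rw [sin]
      push_cast
      ring_nf
      rw [I_sq]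
      ring
    rw [hsin]
    push_cast
    field_simp
    simp only [d]
    push_cast
    ring_nf

lemma integral_star_eVec_dotProduct_mulVec {N : ℕ} (M : Matrix (Fin N) (Fin N) ℂ) (W : ℝ) :
    ∫ f in (-W)..W, star (eVec N f) ⬝ᵥ (M *ᵥ eVec N f) = (M * prolateC N W).trace := by
  have hcont (a b : Fin N) : Continuous fun f => star (eVec N f a) * (M a b * eVec N f b) := by
    have := continuous_apply a |>.comp (continuous_eVec N)
    have := continuous_apply b |>.comp (continuous_eVec N)
    fun_prop
  simp only [dotProduct, mulVec, Finset.mul_sum, Pi.star_apply, trace, diag_apply, mul_apply]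
  rw [intervalIntegral.integral_finsetSum fun a _ =>
    (continuous_finsetSum _ fun b _ => hcont a b).intervalIntegrable _ _]
  refine Finset.sum_congr rfl fun a _ => ?_
  rw [intervalIntegral.integral_finsetSum fun b _ => (hcont a b).intervalIntegrable _ _]
  refine Finset.sum_congr rfl fun b _ => ?_
  simp only [mul_left_comm (star _), intervalIntegral.integral_const_mul,
    integral_star_eVec_mul_eVec]

lemma residP_eq_re_dotProduct {N : ℕ} (P : Matrix (Fin N) (Fin N) ℂ) (f : ℝ) :
    residP P f = (star (eVec N f) ⬝ᵥ (((1 - P)ᴴ * (1 - P)) *ᵥ eVec N f)).re := by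
  rw [← mulVec_mulVec, dotProduct_mulVec, ← star_mulVec, residP, sub_mulVec, one_mulVec,
    dotProduct, re_sum]
  refine Finset.sum_congr rfl fun n _ => ?_
  rw [Pi.star_apply, RCLike.star_def, conj_mul', ← ofReal_pow, ofReal_re]

lemma integral_residP {N : ℕ} (P : Matrix (Fin N) (Fin N) ℂ) (W : ℝ) :
    ∫ f in (-W)..W, residP P f = ((1 - P)ᴴ * (1 - P) * prolateC N W).trace.re := by
  set M := (1 - P)ᴴ * (1 - P)
  have he := continuous_eVec N
  have hcont : Continuous fun f => star (eVec N f) ⬝ᵥ (M *ᵥ eVec N f) := by fun_prop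
  simp only [residP_eq_re_dotProduct, ← integral_star_eVec_dotProduct_mulVec]
  exact reCLM.intervalIntegral_comp_comm (hcont.intervalIntegrable _ _)

end

theorem stmt8_general (N : ℕ) (W : ℝ) (hW : W ∈ Set.Ioo (0 : ℝ) (1 / 2))
    (m : ℕ) (hm : m = ⌊(N : ℝ) * W⌋₊)
    (R : ℕ)
    (V : Matrix (Fin (N - (2 * m + 1))) (Fin R) ℂ) (hV : Vᴴ * V = 1)
    (piv : Fin (N - (2 * m + 1)) → ℝ)
    (hpiv : IsSVD ((Fbar N m)ᴴ * prolateC N W -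
      V * Vᴴ * ((Fbar N m)ᴴ * prolateC N W)) piv) :
    (∫ f in (-W)..W,
        residP (Matrix.fromCols (Fmat N m) (Fbar N m * V) *
          (Matrix.fromCols (Fmat N m) (Fbar N m * V))ᴴ) f)
      ≤ ∑ l, piv l := by
  rcases N.eq_zero_or_pos with rfl | hN
  · simpa [residP] using Finset.sum_nonneg fun l _ => hpiv.1 l
  have h2m : 2 * m + 1 ≤ N := by
    have hmW : (m : ℝ) ≤ N * W := hm ▸ Nat.floor_le (mul_nonneg (Nat.cast_nonneg N) hW.1.le)
    have : (2 * m : ℝ) < N := by nlinarith [hW.2, (Nat.cast_pos.2 hN : (0 : ℝ) < N)]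
    exact_mod_cast this
  have hG := conjTranspose_Fbar_mul_Fbar h2m
  rw [integral_residP, one_sub_fromCols_mul_conjTranspose _ _ _
      (Fmat_mul_conjTranspose_add_Fbar_mul_conjTranspose h2m),
    conjTranspose_mul_self_of_isIdempotentElem hG
      (isHermitian_one.sub (isHermitian_mul_conjTranspose_self V))
      (isIdempotentElem_one_sub_mul_conjTranspose hV)]
  have htrace : (Fbar N m * (1 - V * Vᴴ) * (Fbar N m)ᴴ * prolateC N W).trace =
      (((Fbar N m)ᴴ * prolateC N W - V * Vᴴ * ((Fbar N m)ᴴ * prolateC N W)) * Fbar N m).trace := by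
    have hfactor : (Fbar N m)ᴴ * prolateC N W - V * Vᴴ * ((Fbar N m)ᴴ * prolateC N W) =
        (1 - V * Vᴴ) * ((Fbar N m)ᴴ * prolateC N W) := by
      rw [Matrix.sub_mul, Matrix.one_mul]
    rw [hfactor, trace_mul_comm _ (Fbar N m)]
    simp only [Matrix.mul_assoc]
  exact htrace ▸ hpiv.re_trace_mul_le hG

/-- with `π_l` the singular values of `F̄* B − V V* F̄* B`,
`∫_{−W}^{W} ‖e_f − QQ*e_f‖₂² df ≤ Σ_l π_l` for `Q = [F  F̄ V]`. -/
theorem stmt8 (N : ℕ) (W : ℝ) (hW : W ∈ Set.Ioo (0 : ℝ) (1 / 2))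
    (m : ℕ) (hm : m = ⌊(N : ℝ) * W⌋₊)
    (R : ℕ) (hR : R ≤ N - (2 * m + 1))
    (V : Matrix (Fin (N - (2 * m + 1))) (Fin R) ℂ) (hV : Vᴴ * V = 1)
    (piv : Fin (N - (2 * m + 1)) → ℝ)
    (hpiv : IsSVD ((Fbar N m)ᴴ * prolateC N W -
      V * Vᴴ * ((Fbar N m)ᴴ * prolateC N W)) piv) :
    (∫ f in (-W)..W,
        residP (Matrix.fromCols (Fmat N m) (Fbar N m * V) *
          (Matrix.fromCols (Fmat N m) (Fbar N m * V))ᴴ) f)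
      ≤ ∑ l, piv l :=
  stmt8_general N W hW m hm R V hV piv hpiv
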